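/- arXiv:1409.8665 — 8 statements merged into one kernel-verified Lean document; each statement's English description precedes it below -/
import Mathlib

section
/- For r ≥ 2 and r + 3 ≤ n ≤ 2r, every K_{r+1}-free graph on n vertices with at least t(n,r) - 1 edges is r-colourable. -/
/-- Number of edges of the Turán graph `T(n,r)`. -/
noncomputable def turanEdges (n r : ℕ) : ℕ := (SimpleGraph.turanGraph n r).edgeSet.ncard

/-!
Pass to the complement `H = Gᶜ`. For `r ≤ n ≤ 2r` the complement of `T(n,r)` is a matching with
`n - r` edges, so `e(H) + r ≤ n + 1`. Induct on `n`, for all `r`, with this inequality and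
`K_{r+1}`-freeness as hypotheses. For `r ≥ 2` the inequality gives `e(H) < n`,
so some vertex `v` has `H`-degree at most one. If `v` is adjacent in `G` to every other vertex,
colour `G - v` with `r - 1` colours and give `v` a new one. If `v` misses only `u`, then
`N_G(u) ⊆ N_G(v)`, and `u` can take the colour of `v` in an `r`-colouring of `G - u`.
-/

open Finset

theorem Nat.add_choose_two (m r : ℕ) : (m + r).choose 2 = m.choose 2 + m * r + r.choose 2 := by
  simp [Nat.add_choose_eq, Finset.Nat.antidiagonal_succ]
  ring

namespace SimpleGraph

variable {V : Type*} {G : SimpleGraph V} {k : ℕ}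

theorem ncard_edgeSet_eq_card_edgeFinset [Fintype G.edgeSet] :
    G.edgeSet.ncard = #G.edgeFinset :=
  Set.ncard_eq_toFinset_card' _

theorem ncard_neighborSet_eq_degree (v : V) [Fintype (G.neighborSet v)] :
    (G.neighborSet v).ncard = G.degree v :=
  Set.ncard_eq_toFinset_card' _

variable (G) in
theorem ncard_edgeSet_add_ncard_edgeSet_compl [Finite V] :
    G.edgeSet.ncard + Gᶜ.edgeSet.ncard = (Nat.card V).choose 2 := by
  classical
  have := Fintype.ofFinite V
  rw [← Set.ncard_union_eq (disjoint_edgeSet.2 disjoint_compl_right), ← edgeSet_sup,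
    sup_compl_eq_top, ncard_edgeSet_eq_card_edgeFinset, card_edgeFinset_top_eq_card_choose_two,
    Nat.card_eq_fintype_card]

theorem ncard_edgeSet_induce_compl_singleton_add [Finite V] (v : V) :
    (G.induce {v}ᶜ).edgeSet.ncard + (G.neighborSet v).ncard = G.edgeSet.ncard := by
  classical
  have := Fintype.ofFinite V
  rw [ncard_edgeSet_eq_card_edgeFinset, ncard_edgeSet_eq_card_edgeFinset,
    ncard_neighborSet_eq_degree, card_edgeFinset_induce_compl_singleton,
    card_edgeFinset_deleteIncidenceSet]
  exact Nat.sub_add_cancel (G.degree_le_card_edgeFinset v)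

theorem exists_ncard_neighborSet_le_one [Finite V] (h : G.edgeSet.ncard < Nat.card V) :
    ∃ v, (G.neighborSet v).ncard ≤ 1 := by
  classical
  have := Fintype.ofFinite V
  by_contra! hdeg
  simp only [ncard_neighborSet_eq_degree] at hdeg
  rw [ncard_edgeSet_eq_card_edgeFinset, Nat.card_eq_fintype_card] at h
  have := card_nsmul_le_sum univ (fun v ↦ G.degree v) 2 (fun v _ ↦ hdeg v)
  rw [sum_degrees_eq_twice_card_edges, card_univ, smul_eq_mul] at this
  omega

theorem compl_induce (s : Set V) : (G.induce s)ᶜ = Gᶜ.induce s := by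
  ext x y
  simp [Subtype.ext_iff]

theorem adj_of_neighborSet_compl_eq_empty {v : V} (h : Gᶜ.neighborSet v = ∅) {w : V}
    (hw : w ≠ v) : G.Adj v w := by
  by_contra hvw
  exact h.subset (show Gᶜ.Adj v w from ⟨hw.symm, hvw⟩)

theorem neighborSet_subset_of_neighborSet_compl_eq_singleton {u v : V}
    (h : Gᶜ.neighborSet v = {u}) : G.neighborSet u ⊆ G.neighborSet v := by
  intro w huw
  have hvu : Gᶜ.Adj v u := h.symm.subset rfl
  by_contra hvw
  have hwv : w ≠ v := by rintro rfl; exact hvu.2 huw.symm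
  obtain rfl : w = u := h.subset (show Gᶜ.Adj v w from ⟨hwv.symm, hvw⟩)
  exact G.loopless.irrefl _ huw

theorem CliqueFree.induce (s : Set V) (h : G.CliqueFree k) : (G.induce s).CliqueFree k :=
  h.comap (Copy.induce G s).isContained

theorem CliqueFree.induce_compl_singleton_of_forall_adj {v : V} (hv : ∀ w ≠ v, G.Adj v w)
    (h : G.CliqueFree (k + 1)) : (G.induce {v}ᶜ).CliqueFree k := by
  classical
  intro t ht
  have ht' := (ht.map (f := Function.Embedding.subtype _)).mono (map_comap_le _ _)
  refine h _ (ht'.insert fun w hw ↦ hv w ?_)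
  obtain ⟨w, -, rfl⟩ := Finset.mem_map.1 hw
  exact w.2

theorem Colorable.of_induce_compl_singleton (v : V) (h : (G.induce {v}ᶜ).Colorable k) :
    G.Colorable (k + 1) := by
  classical
  obtain ⟨C⟩ := h
  refine ⟨Coloring.mk (fun w ↦ if hw : w = v then Fin.last k else (C ⟨w, hw⟩).castSucc) ?_⟩
  intro x y hxy
  by_cases hx : x = v <;> by_cases hy : y = v
  · subst hx hy; exact absurd hxy (G.loopless.irrefl _)
  · simp [hx, hy, (Fin.castSucc_lt_last _).ne']
  · simp [hx, hy, (Fin.castSucc_lt_last _).ne]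
  · simpa [hx, hy] using C.valid (show (G.induce {v}ᶜ).Adj ⟨x, hx⟩ ⟨y, hy⟩ from hxy)

theorem Colorable.of_induce_compl_singleton_of_neighborSet_subset {u v : V} (huv : u ≠ v)
    (hN : G.neighborSet u ⊆ G.neighborSet v) (h : (G.induce {u}ᶜ).Colorable k) :
    G.Colorable k := by
  classical
  obtain ⟨C⟩ := h
  have hv : v ∈ ({u}ᶜ : Set V) := huv.symm
  have hcolor_ne : ∀ {y} (hy : y ≠ u), G.Adj u y → C ⟨v, hv⟩ ≠ C ⟨y, hy⟩ := fun _ hadj ↦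
    C.valid (show G.Adj v _ from hN hadj)
  refine ⟨Coloring.mk (fun w ↦ if hw : w = u then C ⟨v, hv⟩ else C ⟨w, hw⟩) ?_⟩
  intro x y hxy
  by_cases hx : x = u <;> by_cases hy : y = u
  · subst hx hy; exact absurd hxy (G.loopless.irrefl _)
  · subst hx; simpa [hy] using hcolor_ne hy hxy
  · subst hy; simpa [hx] using (hcolor_ne hx hxy.symm).symm
  · simpa [hx, hy] using C.valid (show (G.induce {u}ᶜ).Adj ⟨x, hx⟩ ⟨y, hy⟩ from hxy)

theorem colorable_of_cliqueFree_of_ncard_edgeSet_compl_le [Finite V]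
    (hG : G.CliqueFree (k + 1)) (h : Gᶜ.edgeSet.ncard + k ≤ Nat.card V + 1) :
    G.Colorable k := by
  induction hn : Nat.card V generalizing V G k with
  | zero =>
    have := Finite.card_eq_zero_iff.1 hn
    exact .of_isEmpty k
  | succ n ih =>
    have hcard (v : V) : Nat.card ({v}ᶜ : Set V) = n := by
      rw [Nat.card_coe_set_eq, Set.ncard_compl, Set.ncard_singleton, hn, Nat.add_sub_cancel]
    match k with
    | 0 => exact colorable_zero_iff.2 (cliqueFree_one.1 hG)
    | 1 => exact colorable_one_iff.2 (cliqueFree_two.1 hG)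
    | k + 2 =>
      obtain ⟨v, hv⟩ := exists_ncard_neighborSet_le_one (G := Gᶜ) (by omega)
      rcases (Set.ncard_le_one_iff_eq).1 hv with hv | ⟨u, hu⟩
      · have hadj : ∀ w ≠ v, G.Adj v w := fun _ ↦ adj_of_neighborSet_compl_eq_empty hv
        refine .of_induce_compl_singleton v
          (ih (hG.induce_compl_singleton_of_forall_adj hadj) ?_ (hcard v))
        have hedges := ncard_edgeSet_induce_compl_singleton_add (G := Gᶜ) v
        rw [hv, Set.ncard_empty] at hedges
        rw [compl_induce, hcard v]
        omega
      · have hvu : Gᶜ.Adj v u := hu.symm.subset rfl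
        refine .of_induce_compl_singleton_of_neighborSet_subset hvu.1.symm
          (neighborSet_subset_of_neighborSet_compl_eq_singleton hu)
          (ih (hG.induce {u}ᶜ) ?_ (hcard u))
        have hdeg : 0 < (Gᶜ.neighborSet u).ncard := (Set.ncard_pos).2 ⟨v, hvu.symm⟩
        have hedges := ncard_edgeSet_induce_compl_singleton_add (G := Gᶜ) u
        rw [compl_induce, hcard u]
        omega

theorem ncard_edgeSet_compl_turanGraph {n r : ℕ} (h1 : r ≤ n) (h2 : n ≤ 2 * r) :
    (turanGraph n r)ᶜ.edgeSet.ncard = n - r := by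
  obtain ⟨m, rfl⟩ := Nat.exists_eq_add_of_le' h1
  have hm : #(turanGraph m r).edgeFinset = m.choose 2 := by
    rw [← ncard_edgeSet_eq_card_edgeFinset, turanGraph_eq_top.2 (.inr (by omega)),
      ncard_edgeSet_eq_card_edgeFinset, card_edgeFinset_top_eq_card_choose_two, Fintype.card_fin]
  have hsum := ncard_edgeSet_add_ncard_edgeSet_compl (turanGraph (m + r) r)
  rw [ncard_edgeSet_eq_card_edgeFinset, card_edgeFinset_turanGraph_add, hm, Nat.card_fin,
    Nat.add_choose_two] at hsum
  have : m * (r - 1) + m = m * r := by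
    rcases r with _ | r
    · omega
    · simp [Nat.mul_succ]
  omega

end SimpleGraph

theorem turan_near_extremal_colorable_small_general (n r : ℕ)
    (h1 : r + 3 ≤ n) (h2 : n ≤ 2 * r)
    (G : SimpleGraph (Fin n)) (hfree : G.CliqueFree (r + 1))
    (he : turanEdges n r - 1 ≤ G.edgeSet.ncard) :
    G.Colorable r := by
  refine SimpleGraph.colorable_of_cliqueFree_of_ncard_edgeSet_compl_le hfree ?_
  have hG := G.ncard_edgeSet_add_ncard_edgeSet_compl
  have hT := (SimpleGraph.turanGraph n r).ncard_edgeSet_add_ncard_edgeSet_compl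
  have hTc := SimpleGraph.ncard_edgeSet_compl_turanGraph (by omega : r ≤ n) h2
  rw [Nat.card_fin] at hG hT ⊢
  unfold turanEdges at he
  omega

theorem turan_near_extremal_colorable_small (n r : ℕ) (hr : 2 ≤ r)
    (h1 : r + 3 ≤ n) (h2 : n ≤ 2 * r)
    (G : SimpleGraph (Fin n)) (hfree : G.CliqueFree (r + 1))
    (he : turanEdges n r - 1 ≤ G.edgeSet.ncard) :
    G.Colorable r :=
  turan_near_extremal_colorable_small_general n r h1 h2 G hfree he
end

section
/- Let G be a graph and u, v non-adjacent vertices. Let Z_{u,v}(G) be the graph obtained by replacing u with a twin of v. Then χ(G) - 1 ≤ χ(Z_{u,v}(G)) ≤ χ(G), where χ denotes the chromatic number. -/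
/-!
Sending `u` to `v` is a homomorphism from `Z_{u,v}(G)` to `G`, because `u` and `v` have the same
neighbours in `Z_{u,v}(G)` and are not adjacent there; hence `χ(Z_{u,v}(G)) ≤ χ(G)`. Conversely
`G` and `Z_{u,v}(G)` agree away from `u`, so a colouring of `Z_{u,v}(G)` together with a fresh
colour for `u` colours `G`.
-/

/-- Zykov symmetrization: replace `u` with a twin of `v` (delete all edges at `u`,
join `u` to exactly the neighbours of `v`). -/
def zykov {V : Type*} (G : SimpleGraph V) (u v : V) : SimpleGraph V where
  Adj x y := x ≠ y ∧
    ((x ≠ u ∧ y ≠ u ∧ G.Adj x y) ∨ (x = u ∧ G.Adj v y) ∨ (y = u ∧ G.Adj v x))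
  symm := by
    constructor
    rintro x y ⟨hxy, h⟩
    refine ⟨hxy.symm, ?_⟩
    rcases h with ⟨hx, hy, h⟩ | ⟨hx, h⟩ | ⟨hy, h⟩
    · exact Or.inl ⟨hy, hx, h.symm⟩
    · exact Or.inr (Or.inr ⟨hx, h⟩)
    · exact Or.inr (Or.inl ⟨hy, h⟩)
  loopless := ⟨fun x h => h.1 rfl⟩

namespace SimpleGraph

variable {V : Type*}

theorem Colorable.succ_of_adj_imp_off {G H : SimpleGraph V} (u : V)
    (hGH : ∀ x y, x ≠ u → y ≠ u → G.Adj x y → H.Adj x y) {n : ℕ} (hH : H.Colorable n) :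
    G.Colorable (n + 1) := by
  classical
  obtain ⟨c⟩ := hH
  let c' : G.Coloring (Option (Fin n)) := Coloring.mk (fun x => if x = u then none else c x) <| by
    intro x y hxy
    by_cases hx : x = u <;> by_cases hy : y = u
    · exact absurd (hx.trans hy.symm) hxy.ne
    all_goals simp only [hx, hy, if_true, if_false, ne_eq, reduceCtorEq, not_false_eq_true,
      Option.some.injEq]
    exact c.valid (hGH x y hx hy hxy)
  simpa using c'.colorable

theorem chromaticNumber_le_add_one_of_adj_imp_off {G H : SimpleGraph V} (u : V)
    (hGH : ∀ x y, x ≠ u → y ≠ u → G.Adj x y → H.Adj x y) :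
    G.chromaticNumber ≤ H.chromaticNumber + 1 := by
  cases h : H.chromaticNumber using ENat.recTopCoe with
  | top => simp
  | coe n =>
    have hH : H.Colorable n := chromaticNumber_le_iff_colorable.mp h.le
    exact_mod_cast (hH.succ_of_adj_imp_off u hGH).chromaticNumber_le

end SimpleGraph

theorem zykov_adj_of_ne {V : Type*} {G : SimpleGraph V} {u v x y : V} (hx : x ≠ u) (hy : y ≠ u)
    (h : G.Adj x y) : (zykov G u v).Adj x y :=
  ⟨h.ne, Or.inl ⟨hx, hy, h⟩⟩

def zykovHom {V : Type*} [DecidableEq V] (G : SimpleGraph V) (u v : V) : zykov G u v →g G where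
  toFun x := if x = u then v else x
  map_rel' := by
    rintro x y ⟨hxy, ⟨hx, hy, h⟩ | ⟨rfl, h⟩ | ⟨rfl, h⟩⟩
    · simpa [hx, hy] using h
    · simpa [hxy.symm] using h
    · simpa [hxy] using h.symm

theorem zykov_chromaticNumber_bounds_general {V : Type*} (G : SimpleGraph V) (u v : V) :
    G.chromaticNumber - 1 ≤ (zykov G u v).chromaticNumber ∧
      (zykov G u v).chromaticNumber ≤ G.chromaticNumber := by
  classical
  refine ⟨tsub_le_iff_right.mpr ?_, SimpleGraph.chromaticNumber_mono_of_hom (zykovHom G u v)⟩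
  exact SimpleGraph.chromaticNumber_le_add_one_of_adj_imp_off u fun _ _ => zykov_adj_of_ne

theorem zykov_chromaticNumber_bounds {V : Type*} (G : SimpleGraph V) (u v : V)
    (huv : u ≠ v) (hna : ¬ G.Adj u v) :
    G.chromaticNumber - 1 ≤ (zykov G u v).chromaticNumber ∧
      (zykov G u v).chromaticNumber ≤ G.chromaticNumber :=
  zykov_chromaticNumber_bounds_general G u v
end

section
/- If G is a K_{r+1}-free graph on n vertices in which every vertex has degree greater than (3r-4)/(3r-1)·n, then G is r-colourable. -/
open SimpleGraph

lemma SimpleGraph.ncard_neighborSet_eq_degree_s9 {V : Type*} [Fintype V] (G : SimpleGraph V)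
    [DecidableRel G.Adj] (v : V) : (G.neighborSet v).ncard = G.degree v := by
  rw [← Nat.card_coe_set_eq, Nat.card_eq_fintype_card, card_neighborSet_eq_degree]

/-- Andrásfai–Erdős–Sós: a `K_{r+1}`-free graph with all degrees greater than
`(3r-4)/(3r-1) · n` is `r`-colourable. -/
theorem andrasfai_erdos_sos (n r : ℕ) (hr : 2 ≤ r) (G : SimpleGraph (Fin n))
    (hfree : G.CliqueFree (r + 1))
    (hdeg : ∀ v : Fin n, (3 * r - 4 : ℝ) / (3 * r - 1) * n < ((G.neighborSet v).ncard : ℝ)) :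
    G.Colorable r := by
  classical
  -- `minDegree` is `0` on an empty vertex type, so Mathlib's bound cannot hold there.
  cases isEmpty_or_nonempty (Fin n)
  · exact .of_isEmpty r
  refine colorable_of_cliqueFree_lt_minDegree hfree ?_
  obtain ⟨v, hv⟩ := G.exists_minimal_degree_vertex
  have hpos : (0 : ℝ) < 3 * r - 1 := by
    have : (2 : ℝ) ≤ r := by exact_mod_cast hr
    linarith
  rw [hv, Fintype.card_fin, Nat.div_lt_iff_lt_mul (by omega), ← Nat.cast_lt (α := ℝ)]
  have hdeg_v := hdeg v
  rw [ncard_neighborSet_eq_degree_s9, div_mul_eq_mul_div, div_lt_iff₀ hpos] at hdeg_v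
  push_cast [show 4 ≤ 3 * r by omega, show 1 ≤ 3 * r by omega]
  exact hdeg_v
end

section
/- For every c ≥ 0 there exists m such that every maximal triangle-free graph G on n vertices with more than t(n,2) - c·n edges has at most m twin classes (equivalently, G is a blow-up of a triangle-free graph on at most m vertices). -/
/-- `G` is maximal triangle-free: triangle-free, but adding any missing edge creates a
triangle. -/
def MaximalTriangleFree {V : Type*} (G : SimpleGraph V) : Prop :=
  G.CliqueFree 3 ∧ ∀ u v : V, u ≠ v → ¬ G.Adj u v →
    ¬ (G ⊔ SimpleGraph.fromEdgeSet {s(u, v)}).CliqueFree 3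

/-!
Averaging `deg u + deg v` over the edges and applying Cauchy–Schwarz to the degree sequence gives
an edge `uv` with `n (deg u + deg v) ≥ 4e`. As `N(u)` and `N(v)` are disjoint, few missing edges
force the set `W` of vertices adjacent to neither `u` nor `v` to have fewer than `4c + 1` elements.
Maximality makes the neighbourhood of any `a ∈ N(u)` a function of its trace `N(a) ∩ W`: a vertex
`x ∈ N(v)` not adjacent to `a` has a common neighbour with `a`, which triangle-freeness places in
`W`. Hence there are at most `2 ^ |W|` neighbourhoods of vertices of `N(u)`, as many for `N(v)`,
and `|W|` more.
-/

open Finset SimpleGraph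

theorem sq_le_four_mul_turanEdges_two_add_one (n : ℕ) : n ^ 2 ≤ 4 * turanEdges n 2 + 1 := by
  rw [turanEdges, ← coe_edgeFinset, Set.ncard_coe_finset, card_edgeFinset_turanGraph]
  rcases Nat.even_or_odd' n with ⟨k, rfl | rfl⟩
  · rw [Nat.mul_mod_right, show (2 * k) ^ 2 = 4 * k ^ 2 by ring]
    simp
  · rw [Nat.mul_add_mod_self_left, show (2 * k + 1) ^ 2 = 4 * (k ^ 2 + k) + 1 by ring]
    simp

namespace SimpleGraph

variable {V : Type*} {G : SimpleGraph V}

section Degrees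

variable (G) [Fintype V] [DecidableRel G.Adj]

theorem sum_dart_degree_fst : ∑ d : G.Dart, G.degree d.fst = ∑ v, G.degree v ^ 2 := by
  classical
  rw [← sum_fiberwise_of_maps_to (g := fun d : G.Dart => d.fst) (t := univ)
    fun _ _ => mem_univ _]
  refine sum_congr rfl fun v _ => ?_
  rw [sum_congr rfl fun d hd => by rw [(mem_filter.1 hd).2], sum_const, smul_eq_mul, sq]
  congr 1
  exact G.dart_fst_fiber_card_eq_degree v

theorem sum_dart_degree_snd : ∑ d : G.Dart, G.degree d.snd = ∑ v, G.degree v ^ 2 := by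
  rw [← sum_dart_degree_fst]
  exact Fintype.sum_equiv Dart.symm_involutive.toPerm _ _ fun _ => rfl

theorem exists_adj_four_mul_card_edgeFinset_le (h : G ≠ ⊥) :
    ∃ u v, G.Adj u v ∧ 4 * #G.edgeFinset ≤ Fintype.card V * (G.degree u + G.degree v) := by
  obtain ⟨u, v, huv⟩ := ne_bot_iff_exists_adj.1 h
  have : Nonempty G.Dart := ⟨⟨(u, v), huv⟩⟩
  have hcs : (2 * #G.edgeFinset) ^ 2 ≤ Fintype.card V * ∑ v, G.degree v ^ 2 := by
    simpa [sum_degrees_eq_twice_card_edges] using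
      sq_sum_le_card_mul_sum_sq (s := univ) (f := fun v => G.degree v)
  have hsum : ∑ _d : G.Dart, 4 * #G.edgeFinset ≤
      ∑ d : G.Dart, Fintype.card V * (G.degree d.fst + G.degree d.snd) := by
    rw [← mul_sum, ← mul_sum, sum_add_distrib, sum_dart_degree_fst, sum_dart_degree_snd, sum_const,
      card_univ, dart_card_eq_twice_card_edges, smul_eq_mul]
    nlinarith
  obtain ⟨d, -, hd⟩ := exists_le_of_sum_le univ_nonempty hsum
  exact ⟨d.fst, d.snd, d.adj, hd⟩

end Degrees

theorem CliqueFree.not_adj_of_adj_of_adj (h : G.CliqueFree 3) ⦃a b c : V⦄ (hab : G.Adj a b)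
    (hac : G.Adj a c) : ¬ G.Adj b c :=
  fun hbc => isIndepSet_neighborSet_of_triangleFree G h a hab hac hbc.ne hbc

theorem MaximalTriangleFree.exists_adj_adj (hG : MaximalTriangleFree G) {u v : V} (hne : u ≠ v)
    (h : ¬ G.Adj u v) : ∃ z, G.Adj u z ∧ G.Adj v z := by
  classical
  obtain ⟨t, ht⟩ : ∃ t, (G ⊔ edge u v).IsNClique 3 t := not_forall_not.1 (hG.2 u v hne h)
  have ht' : (G ⊔ edge v u).IsNClique 3 t := edge_comm u v ▸ ht
  have hu : u ∈ t := hG.1.mem_of_sup_edge_isNClique ht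
  have hv : v ∈ t := hG.1.mem_of_sup_edge_isNClique ht'
  have htu := ht.erase_of_sup_edge_of_mem hu
  have htv := ht'.erase_of_sup_edge_of_mem hv
  obtain ⟨z, hz, hzv⟩ := exists_mem_ne (by rw [htu.card_eq]; norm_num) v
  have hzu := ne_of_mem_erase hz
  have hzt := mem_of_mem_erase hz
  exact ⟨z, htv.1 (mem_erase.2 ⟨hne, hu⟩) (mem_erase.2 ⟨hzv, hzt⟩) hzu.symm,
    htu.1 (mem_erase.2 ⟨hne.symm, hv⟩) hz hzv.symm⟩

theorem MaximalTriangleFree.adj_of_adj_of_inter_compl_eq (hG : MaximalTriangleFree G)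
    {u v a b x : V} (huv : G.Adj u v) (hua : G.Adj u a) (hub : G.Adj u b)
    (h : G.neighborSet a ∩ (G.neighborSet u ∪ G.neighborSet v)ᶜ =
      G.neighborSet b ∩ (G.neighborSet u ∪ G.neighborSet v)ᶜ)
    (hax : G.Adj a x) : G.Adj b x := by
  have hT := hG.1.not_adj_of_adj_of_adj
  by_cases hux : G.Adj u x
  · exact absurd hax (hT hua hux)
  by_cases hvx : G.Adj v x
  · by_contra hbx
    have hbx' : b ≠ x := by
      rintro rfl
      exact hT huv hub hvx
    obtain ⟨z, hbz, hxz⟩ := hG.exists_adj_adj hbx' hbx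
    have hzW : z ∈ (G.neighborSet u ∪ G.neighborSet v)ᶜ := by
      simp only [Set.mem_compl_iff, Set.mem_union, mem_neighborSet, not_or]
      exact ⟨hT hub.symm hbz, fun hvz => hT hvx hvz hxz⟩
    have haz : G.Adj a z := ((Set.ext_iff.1 h z).2 ⟨hbz, hzW⟩).1
    exact hT hax haz hxz
  · have hxW : x ∈ (G.neighborSet u ∪ G.neighborSet v)ᶜ := by
      simp only [Set.mem_compl_iff, Set.mem_union, mem_neighborSet, not_or]
      exact ⟨hux, hvx⟩
    exact ((Set.ext_iff.1 h x).1 ⟨hax, hxW⟩).1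

theorem MaximalTriangleFree.ncard_image_neighborSet_le (hG : MaximalTriangleFree G) [Finite V]
    {u v : V} (huv : G.Adj u v) :
    (G.neighborSet '' G.neighborSet u).ncard ≤
      2 ^ (G.neighborSet u ∪ G.neighborSet v)ᶜ.ncard := by
  rw [← Set.ncard_powerset]
  refine Set.ncard_le_ncard_of_injOn (· ∩ (G.neighborSet u ∪ G.neighborSet v)ᶜ)
    (fun _ _ => Set.inter_subset_right) ?_
  rintro _ ⟨a, hua, rfl⟩ _ ⟨b, hub, rfl⟩ h
  ext x
  exact ⟨hG.adj_of_adj_of_inter_compl_eq huv hua hub h,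
    hG.adj_of_adj_of_inter_compl_eq huv hub hua h.symm⟩

theorem MaximalTriangleFree.ncard_range_neighborSet_le (hG : MaximalTriangleFree G) [Finite V]
    {u v : V} (huv : G.Adj u v) :
    (Set.range G.neighborSet).ncard ≤
      2 * 2 ^ (G.neighborSet u ∪ G.neighborSet v)ᶜ.ncard +
        (G.neighborSet u ∪ G.neighborSet v)ᶜ.ncard := by
  have hu := hG.ncard_image_neighborSet_le huv
  have hv := hG.ncard_image_neighborSet_le huv.symm
  rw [Set.union_comm] at hv
  have hW := Set.ncard_image_le (f := G.neighborSet)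
    (Set.toFinite (G.neighborSet u ∪ G.neighborSet v)ᶜ)
  rw [← Set.image_univ, ← Set.union_compl_self (G.neighborSet u ∪ G.neighborSet v),
    Set.image_union, Set.image_union]
  refine (Set.ncard_union_le _ _).trans ?_
  have := Set.ncard_union_le (G.neighborSet '' G.neighborSet u) (G.neighborSet '' G.neighborSet v)
  omega

theorem CliqueFree.ncard_compl_union_neighborSet_add_degree_add_degree [Fintype V]
    [DecidableRel G.Adj] (h : G.CliqueFree 3) {u v : V} (huv : G.Adj u v) :
    (G.neighborSet u ∪ G.neighborSet v)ᶜ.ncard + (G.degree u + G.degree v) = Fintype.card V := by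
  have hdisj : Disjoint (G.neighborSet u) (G.neighborSet v) :=
    Set.disjoint_left.2 fun _ hux hvx => h.not_adj_of_adj_of_adj huv hux hvx
  rw [← Nat.card_eq_fintype_card, ← Set.ncard_add_ncard_compl (G.neighborSet u ∪ G.neighborSet v),
    Set.ncard_union_eq hdisj, add_comm]
  simp [← coe_neighborFinset]

theorem CliqueFree.exists_adj_ncard_compl_union_neighborSet_le [Fintype V] [DecidableRel G.Adj]
    (h : G.CliqueFree 3) (hne : G ≠ ⊥) {c : ℝ}
    (hE : (turanEdges (Fintype.card V) 2 : ℝ) - c * Fintype.card V < #G.edgeFinset) :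
    ∃ u v, G.Adj u v ∧ (G.neighborSet u ∪ G.neighborSet v)ᶜ.ncard ≤ ⌈4 * c⌉₊ := by
  obtain ⟨u, v, huv, hdeg⟩ := G.exists_adj_four_mul_card_edgeFinset_le hne
  refine ⟨u, v, huv, ?_⟩
  have hcard := h.ncard_compl_union_neighborSet_add_degree_add_degree huv
  have hturan := sq_le_four_mul_turanEdges_two_add_one (Fintype.card V)
  have hn : 1 ≤ Fintype.card V := Fintype.card_pos_iff.2 ⟨u⟩
  set w := (G.neighborSet u ∪ G.neighborSet v)ᶜ.ncard
  rify at hcard hdeg hturan hn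
  have hw : (w : ℝ) < ⌈4 * c⌉₊ + 1 := by
    have hceil := Nat.le_ceil (4 * c)
    nlinarith
  exact Nat.lt_add_one_iff.1 (by exact_mod_cast hw)

end SimpleGraph

theorem maximal_triangle_free_bounded_twin_classes_general (c : ℝ) :
    ∃ m : ℕ, ∀ n : ℕ, ∀ G : SimpleGraph (Fin n), MaximalTriangleFree G →
      (turanEdges n 2 : ℝ) - c * n < (G.edgeSet.ncard : ℝ) →
      (Set.range G.neighborSet).ncard ≤ m := by
  classical
  refine ⟨2 * 2 ^ ⌈4 * c⌉₊ + ⌈4 * c⌉₊, fun n G hG hE => ?_⟩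
  rcases eq_or_ne G ⊥ with rfl | hne
  · have hsub : Set.range (⊥ : SimpleGraph (Fin n)).neighborSet ⊆ {∅} :=
      Set.range_subset_iff.2 fun _ => neighborSet_bot
    refine (Set.ncard_le_ncard hsub).trans ?_
    rw [Set.ncard_singleton]
    exact le_add_right (Nat.one_le_two_pow.trans (Nat.le_mul_of_pos_left _ two_pos))
  rw [← coe_edgeFinset, Set.ncard_coe_finset] at hE
  obtain ⟨u, v, huv, hw⟩ :=
    hG.1.exists_adj_ncard_compl_union_neighborSet_le hne (by rwa [Fintype.card_fin])
  exact (hG.ncard_range_neighborSet_le huv).trans (by gcongr; norm_num)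

theorem maximal_triangle_free_bounded_twin_classes (c : ℝ) (hc : 0 ≤ c) :
    ∃ m : ℕ, ∀ n : ℕ, ∀ G : SimpleGraph (Fin n), MaximalTriangleFree G →
      (turanEdges n 2 : ℝ) - c * n < (G.edgeSet.ncard : ℝ) →
      (Set.range G.neighborSet).ncard ≤ m :=
  maximal_triangle_free_bounded_twin_classes_general c
end

section
/- If G is a K_{r+1}-free graph on n vertices with more than t(n,r) - ⌊n/r⌋ + 1 edges (n ≥ 2r+1) such that adding any edge creates a K_{r+1}, then G is a complete r-partite graph. -/
open Finset Fintype

section Transversal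

variable {ι α : Type*} [Fintype ι] [DecidableEq ι] [DecidableEq α]

lemma Fintype.card_filter_piFinset_eq_and_eq (s : ι → Finset α) {i j : ι} (hij : i ≠ j)
    {x y : α} (hx : x ∈ s i) (hy : y ∈ s j) :
    #{g ∈ piFinset s | g i = x ∧ g j = y} = ∏ l ∈ (univ.erase j).erase i, #(s l) := by
  rw [← filter_filter, ← piFinset_update_singleton_eq_filter_piFinset_eq s i hx,
    card_filter_piFinset_eq_of_mem (α := fun _ => α) _ j
      (by simpa [Function.update_of_ne hij.symm] using hy)]
  have : ∀ l, #(Function.update s i {x} l) = Function.update (fun l => #(s l)) i 1 l := by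
    intro l
    rcases eq_or_ne l i with rfl | hl <;> simp [*]
  simp only [this, prod_update_of_mem (mem_erase.mpr ⟨hij, mem_univ i⟩), one_mul,
    sdiff_singleton_eq_erase]

lemma Fintype.card_filter_piFinset_mul (s : ι → Finset α) {i j : ι} (hij : i ≠ j)
    (P : α → α → Prop) [DecidableRel P] :
    #{g ∈ piFinset s | P (g i) (g j)} * (#(s i) * #(s j)) =
      #{q ∈ s i ×ˢ s j | P q.1 q.2} * ∏ l, #(s l) := by
  have hfib : #{g ∈ piFinset s | P (g i) (g j)} =
      ∑ q ∈ {q ∈ s i ×ˢ s j | P q.1 q.2}, #{g ∈ piFinset s | g i = q.1 ∧ g j = q.2} := by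
    rw [card_eq_sum_card_fiberwise (f := fun g => (g i, g j))
      (t := {q ∈ s i ×ˢ s j | P q.1 q.2}) fun g hg => by
        simp only [coe_filter, Set.mem_ofPred_eq, mem_piFinset, mem_product] at hg ⊢
        exact ⟨⟨hg.1 i, hg.1 j⟩, hg.2⟩]
    refine Finset.sum_congr rfl fun q hq => ?_
    congr 1
    ext g
    simp only [mem_filter, mem_product] at hq ⊢
    constructor
    · rintro ⟨⟨hg, -⟩, rfl⟩
      exact ⟨hg, rfl, rfl⟩
    · rintro ⟨hg, h1, h2⟩
      rw [h1, h2]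
      exact ⟨⟨hg, hq.2⟩, rfl⟩
  have hprod : ∏ l, #(s l) = #(s i) * (#(s j) * ∏ l ∈ (univ.erase j).erase i, #(s l)) := by
    rw [← mul_prod_erase univ _ (mem_univ j),
      ← mul_prod_erase (univ.erase j) _ (mem_erase.mpr ⟨hij, mem_univ i⟩), mul_left_comm]
  rw [hfib, Finset.sum_congr rfl fun q hq => by
    simp only [mem_filter, mem_product] at hq
    exact Fintype.card_filter_piFinset_eq_and_eq s hij hq.1.1 hq.1.2, Finset.sum_const, smul_eq_mul,
    hprod]
  ring

theorem exists_mul_card_le_sum_card_not_rel [LinearOrder ι] (A : ι → Finset α)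
    (hA : ∀ l, (A l).Nonempty) (R : α → α → Prop) [DecidableRel R]
    (hR : ∀ g ∈ piFinset A, ∃ i j, i < j ∧ ¬ R (g i) (g j)) :
    ∃ i j, i < j ∧ #(A i) * #(A j) ≤
      ∑ p ∈ {p : ι × ι | p.1 < p.2}, #{q ∈ A p.1 ×ˢ A p.2 | ¬ R q.1 q.2} := by
  set B : Finset (ι × ι) := {p | p.1 < p.2}
  set X := ∑ p ∈ B, #{q ∈ A p.1 ×ˢ A p.2 | ¬ R q.1 q.2}
  set bad : ι × ι → Finset (ι → α) := fun p => {g ∈ piFinset A | ¬ R (g p.1) (g p.2)}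
  by_contra! hlt
  have hcover : ∏ l, #(A l) ≤ ∑ p ∈ B, #(bad p) := by
    rw [← card_piFinset]
    refine (card_le_card fun g hg => ?_).trans card_biUnion_le
    obtain ⟨i, j, hij, hg'⟩ := hR g hg
    exact mem_biUnion.mpr ⟨(i, j), by simpa [B] using hij, mem_filter.mpr ⟨hg, hg'⟩⟩
  have hpos : 0 < ∏ l, #(A l) := prod_pos fun l _ => (hA l).card_pos
  -- Every transversal is bad for some pair `p`, but `p` is bad for only a fraction
  -- `#(missing pairs at p) / (#(A p.1) * #(A p.2)) < #(missing pairs at p) / X` of them.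
  have : (X + 1) * ∏ l, #(A l) ≤ X * ∏ l, #(A l) :=
    calc (X + 1) * ∏ l, #(A l) ≤ ∑ p ∈ B, (X + 1) * #(bad p) := by
          rw [← mul_sum]; exact Nat.mul_le_mul_left _ hcover
      _ ≤ ∑ p ∈ B, #(bad p) * (#(A p.1) * #(A p.2)) := sum_le_sum fun p hp => by
          rw [mul_comm]
          exact Nat.mul_le_mul_left _ (hlt p.1 p.2 (by simpa [B] using hp))
      _ = ∑ p ∈ B, #{q ∈ A p.1 ×ˢ A p.2 | ¬ R q.1 q.2} * ∏ l, #(A l) :=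
          sum_congr rfl fun p hp =>
            Fintype.card_filter_piFinset_mul A (by simp [B] at hp; exact hp.ne) fun a b => ¬ R a b
      _ = X * ∏ l, #(A l) := by rw [← sum_mul]
  nlinarith

lemma Fintype.sum_add_add_le_sum_add_add_of_le {a b : ι → ℕ} (hab : ∀ l, a l ≤ b l) {i j : ι}
    (hij : i ≠ j) : ∑ l, a l + (b i + b j) ≤ ∑ l, b l + (a i + a j) := by
  have hsum : ∑ l, b l = ∑ l, a l + ∑ l, (b l - a l) := by
    rw [← sum_add_distrib]
    exact Finset.sum_congr rfl fun l _ => (Nat.add_sub_cancel' (hab l)).symm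
  have hpair : (b i - a i) + (b j - a j) ≤ ∑ l, (b l - a l) := by
    rw [← sum_pair (f := fun l => b l - a l) hij]
    exact sum_le_sum_of_subset (subset_univ _)
  have := hab i
  have := hab j
  omega

end Transversal

lemma Fin.card_filter_val_mod_eq {n r : ℕ} (hr : 0 < r) :
    #{y : Fin (n + 1) | (y : ℕ) % r = n % r} = n / r + 1 := by
  have h : #{y : Fin (n + 1) | (y : ℕ) % r = n % r} = Nat.count (· ≡ n [MOD r]) (n + 1) := by
    rw [card_filter, Nat.count_eq_card_filter_range, card_filter,
      Fin.sum_univ_eq_sum_range (fun x => if x % r = n % r then 1 else 0)]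
    rfl
  rw [h, Nat.count_succ, Nat.count_modEq_card _ hr]
  simp [Nat.ModEq]

namespace SimpleGraph

section Turan

variable {V : Type*} [Fintype V] {r : ℕ}

def turanGraphInduceLastIso (n r : ℕ) :
    (turanGraph (n + 1) r).induce {Fin.last n}ᶜ ≃g turanGraph n r where
  toFun x := x.1.castLT (Fin.val_lt_last x.2)
  invFun i := ⟨i.castSucc, Fin.castSucc_ne_last i⟩
  left_inv _ := rfl
  right_inv _ := rfl
  map_rel_iff' := Iff.rfl

theorem card_edgeFinset_turanGraph_succ {n : ℕ} (hr : 0 < r) :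
    #(turanGraph (n + 1) r).edgeFinset = #(turanGraph n r).edgeFinset + (n - n / r) := by
  have hdeg : (turanGraph (n + 1) r).degree (Fin.last n) = n - n / r := by
    rw [← card_neighborFinset_eq_degree, neighborFinset_eq_filter]
    have := card_filter_add_card_filter_not (s := univ)
      (p := fun y : Fin (n + 1) => (y : ℕ) % r = n % r)
    rw [Fin.card_filter_val_mod_eq hr, card_univ, Fintype.card_fin] at this
    simp only [turanGraph_adj, Fin.val_last, ne_comm (a := n % r), ne_eq]
    omega
  have h := card_edgeFinset_induce_compl_singleton (turanGraph (n + 1) r) (Fin.last n)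
  rw [card_edgeFinset_deleteIncidenceSet, (turanGraphInduceLastIso n r).card_edgeFinset_eq,
    hdeg] at h
  have := degree_le_card_edgeFinset (turanGraph (n + 1) r) (Fin.last n)
  omega

lemma two_mul_card_edgeFinset_turanGraph_add_le (n r : ℕ) :
    2 * #(turanGraph n r).edgeFinset + n * (n / r) ≤ n * n := by
  rcases r.eq_zero_or_pos with rfl | hr
  · have h1 := card_edgeFinset_le_card_choose_two (G := turanGraph n 0)
    rw [Fintype.card_fin, Nat.choose_two_right] at h1
    have h2 := Nat.div_mul_le_self (n * (n - 1)) 2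
    have h3 := Nat.mul_le_mul_left n (Nat.sub_le n 1)
    rw [Nat.div_zero, mul_zero, add_zero]
    omega
  · have h1 := mul_card_edgeFinset_turanGraph_le (n := n) (r := r)
    have h2 := Nat.mul_le_mul_left n (Nat.mul_div_le n r)
    have h3 : (r - 1) * n ^ 2 + n ^ 2 = r * n ^ 2 := by
      rw [← add_one_mul, Nat.sub_add_cancel (show 1 ≤ r from hr)]
    refine Nat.le_of_mul_le_mul_left ?_ hr
    nlinarith

variable {G : SimpleGraph V} [DecidableRel G.Adj]

lemma card_edgeFinset_le_turanGraph (hG : G.CliqueFree (r + 1)) :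
    #G.edgeFinset ≤ #(turanGraph (card V) r).edgeFinset :=
  hG.card_edgeFinset_le.trans_eq card_edgeFinset_turanGraph.symm

lemma exists_degree_add_lt (h : #G.edgeFinset < #(turanGraph (card V) r).edgeFinset) :
    ∃ v, G.degree v + card V / r < card V := by
  by_contra! hdeg
  have hsum : card V * card V ≤ 2 * #G.edgeFinset + card V * (card V / r) := by
    calc card V * card V = ∑ _v : V, card V := by simp
      _ ≤ ∑ v, (G.degree v + card V / r) := sum_le_sum fun v _ => hdeg v
      _ = _ := by simp [sum_add_distrib, sum_degrees_eq_twice_card_edges]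
  have := two_mul_card_edgeFinset_turanGraph_add_le (card V) r
  omega

lemma two_mul_card_edgeFinset_add_sum_sq {β : Type*} [Fintype β] [DecidableEq β]
    (c : V → β) (hG : ∀ x y, G.Adj x y ↔ c x ≠ c y) :
    2 * #G.edgeFinset + ∑ b, #{x | c x = b} ^ 2 = card V ^ 2 := by
  have hdeg : ∀ x, G.degree x + #{y | c y = c x} = card V := by
    intro x
    rw [← card_neighborFinset_eq_degree, neighborFinset_eq_filter, ← card_univ,
      ← card_filter_add_card_filter_not (s := univ) (p := fun y => c y = c x), add_comm]
    simp only [hG, ne_comm (a := c x), ne_eq]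
  have hfib : ∑ x, #{y | c y = c x} = ∑ b, #{x | c x = b} ^ 2 := by
    rw [← sum_fiberwise univ c]
    refine sum_congr rfl fun b _ => ?_
    rw [Finset.sum_congr rfl fun x hx => by rw [(mem_filter.mp hx).2], sum_const, smul_eq_mul, sq]
  rw [← sum_degrees_eq_twice_card_edges, ← hfib, ← sum_add_distrib,
    sum_congr rfl fun x _ => hdeg x]
  simp [sq]

/-- Turán's theorem for the complete `r`-partite graph with parts of sizes `e l`. -/
lemma sq_sum_le_two_mul_card_edgeFinset_turanGraph_add (e : Fin r → ℕ) :
    (∑ l, e l) ^ 2 ≤ 2 * #(turanGraph (∑ l, e l) r).edgeFinset + ∑ l, e l ^ 2 := by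
  classical
  let K := completeMultipartiteGraph fun l => Fin (e l)
  have hK : K.CliqueFree (r + 1) :=
    (Coloring.mk Sigma.fst fun h => h).colorable.cliqueFree (by simp)
  have hcard : card (Σ l, Fin (e l)) = ∑ l, e l := by simp
  have hfib : ∀ l, #{x : Σ l, Fin (e l) | x.1 = l} = e l := by
    intro l
    rw [card_filter, Fintype.sum_sigma]
    simp [apply_ite Finset.card]
  have h := two_mul_card_edgeFinset_add_sum_sq (G := K) Sigma.fst fun x y => Iff.rfl
  have ht := card_edgeFinset_le_turanGraph hK
  simp only [hcard, hfib] at h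
  rw [hcard] at ht
  omega

/-- Adding one vertex to each of two different parts of a complete `r`-partite graph leaves it
`K_{r+1}`-free, so Turán's theorem bounds its edge count. -/
lemma card_edgeFinset_add_le_turanGraph_add_two (c : V → Fin r)
    (hG : ∀ x y, G.Adj x y ↔ c x ≠ c y) {i j : Fin r} (hij : i ≠ j) :
    #G.edgeFinset + 2 * card V + 1 ≤
      #(turanGraph (card V + 2) r).edgeFinset + #{x | c x = i} + #{x | c x = j} := by
  set n : Fin r → ℕ := fun l => #{x | c x = l}
  set e : Fin r → ℕ := fun l => n l + (if l = i then 1 else 0) + (if l = j then 1 else 0)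
  have hn : ∑ l, n l = card V := (card_eq_sum_card_fiberwise fun x _ => mem_univ (c x)).symm
  have he : ∑ l, e l = card V + 2 := by simp [e, sum_add_distrib, hn]
  have he2 : ∑ l, e l ^ 2 = ∑ l, n l ^ 2 + 2 * (n i + n j + 1) := by
    have : ∀ l, e l ^ 2 =
        n l ^ 2 + ((if l = i then 2 * n i + 1 else 0) + (if l = j then 2 * n j + 1 else 0)) := by
      intro l
      by_cases hi : l = i <;> by_cases hj : l = j <;> simp_all [e] <;> ring
    simp only [this, sum_add_distrib, Fintype.sum_ite_eq']
    ring
  have hT := sq_sum_le_two_mul_card_edgeFinset_turanGraph_add e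
  rw [he, he2] at hT
  have hK : 2 * #G.edgeFinset + ∑ l, n l ^ 2 = card V ^ 2 :=
    two_mul_card_edgeFinset_add_sum_sq c hG
  have hsq : (card V + 2) ^ 2 = card V ^ 2 + 4 * card V + 4 := by ring
  change _ ≤ _ + n i + n j
  omega

end Turan

section Coloring

variable {V : Type*} {G : SimpleGraph V} {r : ℕ}

lemma maximal_cliqueFree_of_not_cliqueFree_sup_edge {n : ℕ} (hG : G.CliqueFree n)
    (hsat : ∀ u v, u ≠ v → ¬ G.Adj u v → ¬ (G ⊔ edge u v).CliqueFree n) :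
    Maximal (·.CliqueFree n) G := by
  refine ⟨hG, fun H hH hle u v huv => ?_⟩
  by_contra hn
  exact hsat u v (H.ne_of_adj huv) hn
    (hH.anti (sup_le hle ((edge_le_iff (G := H)).mpr (.inr huv))))

lemma IsNClique.exists_color_eq {s : Finset V} (hs : G.IsNClique r s) (C : G.Coloring (Fin r))
    (c : Fin r) : ∃ z ∈ s, C z = c := by
  classical
  have hinj : Set.InjOn C s := fun x hx y hy hxy => by
    by_contra hne
    exact C.valid (hs.1 hx hy hne) hxy
  have himg : s.image C = univ :=
    eq_univ_of_card _ (by rw [card_image_of_injOn hinj, hs.2, Fintype.card_fin])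
  obtain ⟨z, hz, hzc⟩ := mem_image.mp (himg ▸ mem_univ c)
  exact ⟨z, hz, hzc⟩

lemma adj_iff_color_ne_of_maximal_cliqueFree (h : Maximal (·.CliqueFree (r + 1)) G)
    (C : G.Coloring (Fin r)) (x y : V) : G.Adj x y ↔ C x ≠ C y := by
  classical
  refine ⟨C.valid, fun hne => ?_⟩
  by_contra hn
  have hxy : x ≠ y := by rintro rfl; exact hne rfl
  obtain ⟨s, hxs, -, hx, hy⟩ := exists_of_maximal_cliqueFree_not_adj h hxy hn
  obtain ⟨z, hz, hzx⟩ := hy.exists_color_eq C (C x)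
  rcases mem_insert.mp hz with rfl | hz
  · exact hne hzx.symm
  · exact C.valid (hx.1 (mem_insert_self x s) (mem_insert_of_mem hz)
      (by rintro rfl; exact hxs hz)) hzx.symm

lemma turanGraph_colorable {n : ℕ} (hr : 0 < r) : (turanGraph n r).Colorable r :=
  ⟨Coloring.mk (fun x => ⟨x % r, Nat.mod_lt _ hr⟩) fun h hc => h (Fin.mk.inj_iff.mp hc)⟩

lemma CliqueFree.colorable_of_card_turanGraph_le [Fintype V] [DecidableRel G.Adj]
    (hG : G.CliqueFree (r + 1)) (h : #(turanGraph (card V) r).edgeFinset ≤ #G.edgeFinset) :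
    G.Colorable r := by
  classical
  rcases r.eq_zero_or_pos with rfl | hr
  · exact colorable_zero_iff.mpr (cliqueFree_one.mp hG)
  · have hmax : G.IsTuranMaximal r :=
      ⟨hG, fun H _ hH => (card_edgeFinset_le_turanGraph hH).trans h⟩
    obtain ⟨φ⟩ := hmax.nonempty_iso_turanGraph
    exact (turanGraph_colorable hr).of_hom φ.toEmbedding.toHom

lemma not_cliqueFree_of_pairwise_adj {v : V} {g : Fin r → V}
    (hg : ∀ i j, i < j → G.Adj (g i) (g j)) (hv : ∀ i, G.Adj v (g i)) :
    ¬ G.CliqueFree (r + 1) := by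
  classical
  have hadj : ∀ i j, i ≠ j → G.Adj (g i) (g j) := fun i j hij =>
    hij.lt_or_gt.elim (hg i j) fun h => (hg j i h).symm
  have hinj : Function.Injective g := fun i j hij => by
    by_contra hne
    exact (hadj i j hne).ne hij
  have hclique : G.IsNClique r (univ.image g) := by
    refine ⟨?_, by rw [card_image_of_injective _ hinj, card_univ, Fintype.card_fin]⟩
    simp only [coe_image, coe_univ, Set.image_univ]
    rintro _ ⟨i, rfl⟩ _ ⟨j, rfl⟩ hne
    exact hadj i j fun h => hne (h ▸ rfl)
  exact fun hG => hG _ (hclique.insert (by simpa using hv))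

lemma Colorable.of_coloring_induce_compl_singleton [DecidableEq V] (v : V)
    (C : (G.induce {v}ᶜ).Coloring (Fin r)) (l : Fin r)
    (hl : ∀ x : ({v}ᶜ : Set V), G.Adj v x → C x ≠ l) : G.Colorable r := by
  refine ⟨Coloring.mk (fun x => if h : x = v then l else C ⟨x, h⟩) fun {x y} hxy => ?_⟩
  by_cases hx : x = v <;> by_cases hy : y = v
  · exact absurd (hx.trans hy.symm) hxy.ne
  · subst hx; simpa [hy] using (hl ⟨y, hy⟩ hxy).symm
  · subst hy; simpa [hx] using hl ⟨x, hx⟩ hxy.symm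
  · simpa [hx, hy] using C.valid (show (G.induce {v}ᶜ).Adj ⟨x, hx⟩ ⟨y, hy⟩ from hxy)

end Coloring

section Step

variable {V : Type*} [Fintype V] [DecidableEq V] {G : SimpleGraph V} [DecidableRel G.Adj]
  {r : ℕ}

omit [DecidableRel G.Adj] in
lemma card_compl_singleton_add_one (v : V) : card ({v}ᶜ : Set V) + 1 = card V := by
  rw [Fintype.card_compl_set, Set.card_singleton]
  have := Fintype.card_pos_iff.mpr ⟨v⟩
  omega

lemma card_filter_adj_compl_singleton (v : V) :
    #{x : ({v}ᶜ : Set V) | G.Adj v x} = G.degree v := by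
  have : ({x | G.Adj v x} : Finset ({v}ᶜ : Set V)).map (Function.Embedding.subtype _) =
      G.neighborFinset v := by
    ext x
    simpa using fun h : G.Adj v x => h.ne'
  rw [← card_neighborFinset_eq_degree, ← this, card_map]

/-- The pairs counted on the left give distinct edges of `H` missing from `G`. -/
lemma sum_card_not_adj_add_card_edgeFinset_le {ι : Type*} [LinearOrder ι] [Fintype ι]
    {H : SimpleGraph V} [DecidableRel H.Adj] (hle : G ≤ H) (c : V → ι)
    (hH : ∀ x y, c x ≠ c y → H.Adj x y) (A : ι → Finset V) (hA : ∀ l, ∀ x ∈ A l, c x = l) :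
    ∑ p ∈ {p : ι × ι | p.1 < p.2}, #{q ∈ A p.1 ×ˢ A p.2 | ¬ G.Adj q.1 q.2} + #G.edgeFinset ≤
      #H.edgeFinset := by
  set S : ι × ι → Finset (V × V) := fun p => {q ∈ A p.1 ×ˢ A p.2 | ¬ G.Adj q.1 q.2}
  have hS : ∀ x ∈ ({p : ι × ι | p.1 < p.2} : Finset _).sigma S,
      c x.2.1 < c x.2.2 ∧ ¬ G.Adj x.2.1 x.2.2 := by
    rintro ⟨p, q⟩ hx
    simp only [mem_sigma, mem_filter, mem_univ, true_and, mem_product, S] at hx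
    rw [hA _ _ hx.2.1.1, hA _ _ hx.2.1.2]
    exact ⟨hx.1, hx.2.2⟩
  have hmaps : ∀ x ∈ ({p : ι × ι | p.1 < p.2} : Finset _).sigma S,
      s(x.2.1, x.2.2) ∈ H.edgeFinset \ G.edgeFinset := fun x hx => by
    simpa using ⟨hH _ _ (hS x hx).1.ne, (hS x hx).2⟩
  have hinj : Set.InjOn (fun x : (_ : ι × ι) × (V × V) => s(x.2.1, x.2.2))
      (({p : ι × ι | p.1 < p.2} : Finset _).sigma S) := by
    rintro ⟨p, q⟩ hx ⟨p', q'⟩ hx' heq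
    have h1 := hS _ hx
    have h2 := hS _ hx'
    simp only [mem_coe, mem_sigma, mem_filter, mem_univ, true_and, mem_product, S] at hx hx' h1 h2
    rcases Sym2.eq_iff.mp heq with ⟨ha, hb⟩ | ⟨ha, hb⟩
    · have hq : q = q' := Prod.ext ha hb
      subst hq
      have hp : p = p' := Prod.ext ((hA _ _ hx.2.1.1).symm.trans (hA _ _ hx'.2.1.1))
        ((hA _ _ hx.2.1.2).symm.trans (hA _ _ hx'.2.1.2))
      subst hp
      rfl
    · simp only at ha hb
      rw [ha, hb] at h1
      exact absurd (h1.1.trans h2.1) (lt_irrefl _)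
  have hcard := card_le_card_of_injOn _ hmaps hinj
  rw [card_sigma] at hcard
  simp only [S] at hcard
  have := card_sdiff_add_card_eq_card (edgeFinset_mono hle)
  omega

theorem exists_card_edgeFinset_add_le (hG : G.CliqueFree (r + 1)) (v : V)
    {H : SimpleGraph ({v}ᶜ : Set V)} [DecidableRel H.Adj] (hle : G.induce {v}ᶜ ≤ H)
    (c : ({v}ᶜ : Set V) → Fin r) (hH : ∀ x y, H.Adj x y ↔ c x ≠ c y)
    (hc : ∀ l, ∃ x : ({v}ᶜ : Set V), G.Adj v x ∧ c x = l) :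
    ∃ i j, i ≠ j ∧ #G.edgeFinset + #{x | c x = i} + #{x | c x = j} ≤ #H.edgeFinset + card V := by
  set A : Fin r → Finset ({v}ᶜ : Set V) := fun l => {x | G.Adj v x ∧ c x = l}
  have hA : ∀ l, (A l).Nonempty := fun l => by
    obtain ⟨x, hx⟩ := hc l
    exact ⟨x, by simpa [A] using hx⟩
  have htrans : ∀ g ∈ piFinset A, ∃ i j, i < j ∧ ¬ (G.induce {v}ᶜ).Adj (g i) (g j) := by
    intro g hg
    by_contra! hadj
    refine not_cliqueFree_of_pairwise_adj (v := v) (g := fun l => (g l : V)) hadj (fun l => ?_) hG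
    exact (mem_filter.mp (mem_piFinset.mp hg l)).2.1
  obtain ⟨i, j, hij, hmiss⟩ := exists_mul_card_le_sum_card_not_rel A hA _ htrans
  have hedges := sum_card_not_adj_add_card_edgeFinset_le hle c (fun x y => (hH x y).mpr) A
    fun l x hx => (mem_filter.mp hx).2.2
  have hdel := card_edgeFinset_induce_compl_singleton G v
  rw [card_edgeFinset_deleteIncidenceSet] at hdel
  have hdeg : ∑ l, #(A l) = G.degree v := by
    rw [← card_filter_adj_compl_singleton v, card_eq_sum_card_fiberwise fun x _ => mem_univ (c x)]
    simp only [filter_filter, A]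
  have hsplit := sum_add_add_le_sum_add_add_of_le (a := fun l => #(A l))
    (b := fun l => #{x | c x = l}) (fun l => card_le_card fun x hx => by simp_all [A]) hij.ne
  have hcardW : ∑ l, #{x : ({v}ᶜ : Set V) | c x = l} + 1 = card V := by
    rw [← card_eq_sum_card_fiberwise fun x _ => mem_univ (c x), card_univ,
      card_compl_singleton_add_one]
  have hprod : #(A i) + #(A j) ≤ #(A i) * #(A j) + 1 := by
    have := (hA i).card_pos
    have := (hA j).card_pos
    nlinarith
  have := degree_le_card_edgeFinset G v
  exact ⟨i, j, hij.ne, by omega⟩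

theorem card_edgeFinset_add_div_le_of_forall_exists_adj (hG : G.CliqueFree (r + 1)) (v : V)
    {H : SimpleGraph ({v}ᶜ : Set V)} [DecidableRel H.Adj] (hle : G.induce {v}ᶜ ≤ H)
    (c : ({v}ᶜ : Set V) → Fin r) (hH : ∀ x y, H.Adj x y ↔ c x ≠ c y)
    (hc : ∀ l, ∃ x : ({v}ᶜ : Set V), G.Adj v x ∧ c x = l) :
    #G.edgeFinset + card V / r ≤ #(turanGraph (card V) r).edgeFinset + 1 := by
  obtain ⟨i, j, hij, hX⟩ := exists_card_edgeFinset_add_le hG v hle c hH hc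
  have hY := card_edgeFinset_add_le_turanGraph_add_two c hH hij
  rw [← card_compl_singleton_add_one v] at hX ⊢
  set m := card ({v}ᶜ : Set V)
  have hT : #(turanGraph (m + 2) r).edgeFinset =
      #(turanGraph (m + 1) r).edgeFinset + (m + 1 - (m + 1) / r) :=
    card_edgeFinset_turanGraph_succ i.pos
  have := Nat.div_le_self (m + 1) r
  omega

/-- Brouwer's theorem, with `t(n,r) - ⌊n/r⌋ + 1 < e(G)` written without truncated subtraction. -/
theorem CliqueFree.colorable_of_card_turanGraph_add_two_le (hG : G.CliqueFree (r + 1))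
    (h : #(turanGraph (card V) r).edgeFinset + 2 ≤ #G.edgeFinset + card V / r) :
    G.Colorable r := by
  induction hk : card V generalizing V with
  | zero =>
    have := card_edgeFinset_le_turanGraph hG
    simp only [hk, Nat.zero_div] at h this
    omega
  | succ k ih =>
    by_cases ht : #(turanGraph (card V) r).edgeFinset ≤ #G.edgeFinset
    · exact hG.colorable_of_card_turanGraph_le ht
    obtain ⟨v, hv⟩ := exists_degree_add_lt (not_le.mp ht)
    have hr : 0 < r := Nat.pos_of_ne_zero fun hr => (cliqueFree_one.mp (hr ▸ hG)).false v
    have hW : card ({v}ᶜ : Set V) = k := by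
      have := card_compl_singleton_add_one v
      omega
    obtain ⟨H, hle, hmax⟩ := Finite.exists_le_maximal
      (p := fun H : SimpleGraph ({v}ᶜ : Set V) => H.CliqueFree (r + 1))
      (hG.comap (Embedding.induce ({v}ᶜ : Set V)).isContained)
    classical
    rw [hk] at h hv
    have hH : #(turanGraph k r).edgeFinset + 2 ≤ #H.edgeFinset + k / r := by
      have hdel := card_edgeFinset_induce_compl_singleton G v
      rw [card_edgeFinset_deleteIncidenceSet] at hdel
      have := card_le_card (edgeFinset_mono hle)
      have := degree_le_card_edgeFinset G v
      have := card_edgeFinset_turanGraph_succ (n := k) hr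
      have := Nat.div_le_div_right (c := r) (Nat.le_succ k)
      have := Nat.div_le_self k r
      omega
    obtain ⟨C⟩ := ih hmax.1 (by rwa [hW]) hW
    by_cases hext : ∃ l, ∀ x : ({v}ᶜ : Set V), G.Adj v x → C x ≠ l
    · obtain ⟨l, hl⟩ := hext
      exact Colorable.of_coloring_induce_compl_singleton v (C.comp (Hom.ofLE hle)) l hl
    push Not at hext
    have := card_edgeFinset_add_div_le_of_forall_exists_adj hG v hle C
      (adj_iff_color_ne_of_maximal_cliqueFree hmax C) hext
    rw [hk] at this
    omega

end Step

end SimpleGraph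

theorem saturated_near_extremal_complete_multipartite_general (n r : ℕ)
    (G : SimpleGraph (Fin n)) (hfree : G.CliqueFree (r + 1))
    (hsat : ∀ u v : Fin n, u ≠ v → ¬ G.Adj u v →
      ¬ (G ⊔ SimpleGraph.fromEdgeSet {s(u, v)}).CliqueFree (r + 1))
    (he : turanEdges n r - n / r + 1 < G.edgeSet.ncard) :
    ∃ f : Fin n → Fin r, ∀ u v : Fin n, G.Adj u v ↔ f u ≠ f v := by
  classical
  have hmax := SimpleGraph.maximal_cliqueFree_of_not_cliqueFree_sup_edge hfree hsat
  have ht : turanEdges n r = #(SimpleGraph.turanGraph n r).edgeFinset :=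
    Set.ncard_eq_toFinset_card' _
  have hG : G.edgeSet.ncard = #G.edgeFinset := Set.ncard_eq_toFinset_card' _
  obtain ⟨C⟩ := hfree.colorable_of_card_turanGraph_add_two_le (by
    rw [Fintype.card_fin]
    omega)
  exact ⟨C, SimpleGraph.adj_iff_color_ne_of_maximal_cliqueFree hmax C⟩

theorem saturated_near_extremal_complete_multipartite (n r : ℕ) (hn : 2 * r + 1 ≤ n)
    (G : SimpleGraph (Fin n)) (hfree : G.CliqueFree (r + 1))
    (hsat : ∀ u v : Fin n, u ≠ v → ¬ G.Adj u v →
      ¬ (G ⊔ SimpleGraph.fromEdgeSet {s(u, v)}).CliqueFree (r + 1))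
    (he : turanEdges n r - n / r + 1 < G.edgeSet.ncard) :
    ∃ f : Fin n → Fin r, ∀ u v : Fin n, G.Adj u v ↔ f u ≠ f v :=
  saturated_near_extremal_complete_multipartite_general n r G hfree hsat he
end

section
/- For every k ≥ 2 and r ≥ 2, Λ_r(k) ≥ k - r, where Λ_r(k) is the minimum over all K_{r+1}-free graphs H with clique number exactly r and chromatic number at least k of the quantity (r-1)|V(H)| minus the maximum over r-cliques C of H of the sum of degrees of the vertices in C. -/
/-!
Fix an `r`-clique `C` of a `K_{r+1}`-free graph `H`. Every vertex `u` has a non-neighbour in `C`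
(a vertex of `C` counts as its own non-neighbour); call `u` saturated if it has exactly one, `c u`.
Counting edges between `C` and `V(H)` from the other side, `∑_{v ∈ C} deg v ≤ (r - 1)|V(H)| - t`,
where `t` is the number of unsaturated vertices. Colouring each saturated `u` by `c u` and each
unsaturated vertex by a colour of its own is proper, since adjacent saturated `a`, `b` with
`c a = c b = c` would form an `(r + 1)`-clique with `C \ {c}`. Hence `k ≤ χ(H) ≤ r + t`.
The minimum defining `Λ_r(k)` is over a nonempty set: `K_r` plus a disjoint shift graph on
`2 ^ k` points is `K_{r+1}`-free, since the shift graph is triangle-free, and has chromatic number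
at least `k`.
-/

/-- `Λ_r(H)`: `(r-1)|V(H)|` minus the maximum, over `r`-cliques `C` of `H`, of the sum of
the degrees of the vertices of `C`. -/
noncomputable def lamGraph (r : ℕ) {n : ℕ} (H : SimpleGraph (Fin n)) : ℕ :=
  (r - 1) * n -
    sSup {d : ℕ | ∃ C : Finset (Fin n), H.IsNClique r C ∧
      d = ∑ v ∈ C, (H.neighborSet v).ncard}

/-- `Λ_r(k)`: the minimum of `Λ_r(H)` over graphs `H` with clique number exactly `r`
and chromatic number at least `k`. -/
noncomputable def lam (r k : ℕ) : ℕ :=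
  sInf {L : ℕ | ∃ n : ℕ, ∃ H : SimpleGraph (Fin n), H.CliqueFree (r + 1) ∧
    (∃ C : Finset (Fin n), H.IsNClique r C) ∧ (k : ℕ∞) ≤ H.chromaticNumber ∧
    L = lamGraph r H}

open Finset

namespace SimpleGraph

section Coloring

variable {V α : Type*} [DecidableEq V] {G : SimpleGraph V}

theorem colorable_card_add_card_of_forall_adj_ne (P : Finset α) (T : Finset V) (f : V → α)
    (hfP : ∀ v ∉ T, f v ∈ P) (hf : ∀ a b, a ∉ T → b ∉ T → G.Adj a b → f a ≠ f b) :
    G.Colorable (#P + #T) := by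
  let c : G.Coloring (P ⊕ T) := Coloring.mk
    (fun v => if hv : v ∈ T then .inr ⟨v, hv⟩ else .inl ⟨f v, hfP v hv⟩)
    (fun {a b} hab => by
      by_cases ha : a ∈ T <;> by_cases hb : b ∈ T <;> simp only [ha, hb, dite_true, dite_false,
        ne_eq, reduceCtorEq, not_false_eq_true, Sum.inl.injEq, Sum.inr.injEq, Subtype.mk.injEq]
      · exact hab.ne
      · exact hf a b ha hb hab)
  simpa using c.colorable

end Coloring

section CliqueNeighborhood

variable {V : Type*} {G : SimpleGraph V} [DecidableRel G.Adj] {r : ℕ} {C : Finset V}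

variable (G) in
def nonNeighborsIn (C : Finset V) (u : V) : Finset V := {c ∈ C | ¬G.Adj c u}

theorem card_filter_adj_add_card_nonNeighborsIn (C : Finset V) (u : V) :
    #{c ∈ C | G.Adj c u} + #(G.nonNeighborsIn C u) = #C :=
  card_filter_add_card_filter_not _

theorem sum_degree_eq_sum_card_filter_adj [Fintype V] (C : Finset V) :
    ∑ v ∈ C, G.degree v = ∑ u, #{c ∈ C | G.Adj c u} := by
  simp_rw [← card_neighborFinset_eq_degree, neighborFinset_eq_filter]
  exact sum_card_bipartiteAbove_eq_sum_card_bipartiteBelow _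

theorem IsNClique.nonNeighborsIn_nonempty (hC : G.IsNClique r C) (hfree : G.CliqueFree (r + 1))
    (u : V) : (G.nonNeighborsIn C u).Nonempty := by
  obtain ⟨c, hc, hnadj⟩ := hC.exists_not_adj_of_cliqueFree_succ hfree u
  exact ⟨c, mem_filter.2 ⟨hc, fun h => hnadj h.symm⟩⟩

theorem IsNClique.nonNeighborsIn_ne_singleton_of_adj [DecidableEq V] (hC : G.IsNClique r C)
    (hfree : G.CliqueFree (r + 1)) {a b c : V} (hab : G.Adj a b)
    (ha : G.nonNeighborsIn C a = {c}) : G.nonNeighborsIn C b ≠ {c} := by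
  intro hb
  have hc : c ∈ C := (mem_filter.1 (ha ▸ mem_singleton_self c)).1
  have adj_of_ne (u : V) (hu : G.nonNeighborsIn C u = {c}) (w : V) (hw : w ∈ C \ {c}) :
      G.Adj u w := by
    obtain ⟨hwC, hwc⟩ := mem_sdiff.1 hw
    by_contra h
    exact hwc (hu ▸ mem_filter.2 ⟨hwC, fun h' => h h'.symm⟩)
  -- `a`, `b` and the `r - 1` vertices of `C` other than `c` form an `(r + 1)`-clique.
  refine ((hC.insert_erase (adj_of_ne b hb) hc).insert (a := a) fun w hw => ?_).not_cliqueFree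
    hfree
  rcases mem_insert.1 hw with rfl | hw
  · exact hab
  · exact adj_of_ne a ha w (by simpa [sdiff_singleton_eq_erase] using hw)

theorem IsNClique.colorable_add_card [Fintype V] [DecidableEq V] (hC : G.IsNClique r C)
    (hfree : G.CliqueFree (r + 1)) :
    G.Colorable (r + #{u | 2 ≤ #(G.nonNeighborsIn C u)}) := by
  have hsingle (u : V) (hu : u ∉ ({u | 2 ≤ #(G.nonNeighborsIn C u)} : Finset V)) :
      ∃ c ∈ C, G.nonNeighborsIn C u = {c} := by
    have hpos := (hC.nonNeighborsIn_nonempty hfree u).card_pos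
    simp only [mem_filter, mem_univ, true_and, not_le] at hu
    obtain ⟨c, hc⟩ := (card_eq_one (s := G.nonNeighborsIn C u)).1 (by omega)
    exact ⟨c, (mem_filter.1 (hc ▸ mem_singleton_self c)).1, hc⟩
  have hP : #(C.image ({·} : V → Finset V)) = r := by
    rw [card_image_of_injective _ singleton_injective, hC.card_eq]
  rw [← hP]
  refine colorable_card_add_card_of_forall_adj_ne _ _ (G.nonNeighborsIn C)
    (fun u hu => ?_) (fun a b ha _ hab => ?_)
  · obtain ⟨c, hc, hu⟩ := hsingle u hu
    exact hu ▸ mem_image_of_mem _ hc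
  · obtain ⟨c, -, hac⟩ := hsingle a ha
    rw [hac]
    exact fun hcb => hC.nonNeighborsIn_ne_singleton_of_adj hfree hab hac hcb.symm

theorem IsNClique.sum_degree_add_card_le [Fintype V] (hC : G.IsNClique r C)
    (hfree : G.CliqueFree (r + 1)) :
    ∑ v ∈ C, G.degree v + #{u | 2 ≤ #(G.nonNeighborsIn C u)} ≤ (r - 1) * Fintype.card V := by
  rw [sum_degree_eq_sum_card_filter_adj, card_filter, ← sum_add_distrib, mul_comm,
    ← smul_eq_mul, ← card_univ, ← sum_const]
  refine sum_le_sum fun u _ => ?_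
  have hsplit := card_filter_adj_add_card_nonNeighborsIn (G := G) C u
  have hpos := (hC.nonNeighborsIn_nonempty hfree u).card_pos
  rw [hC.card_eq] at hsplit
  split_ifs <;> omega

theorem IsNClique.sum_degree_add_sub_le [Fintype V] [DecidableEq V] {k : ℕ}
    (hC : G.IsNClique r C) (hfree : G.CliqueFree (r + 1)) (hk : k ≤ G.chromaticNumber) :
    ∑ v ∈ C, G.degree v + (k - r) ≤ (r - 1) * Fintype.card V := by
  have hcol : k ≤ r + #{u | 2 ≤ #(G.nonNeighborsIn C u)} := by
    exact_mod_cast hk.trans (hC.colorable_add_card hfree).chromaticNumber_le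
  have := hC.sum_degree_add_card_le hfree
  omega

end CliqueNeighborhood

theorem CliqueFree.sum {V W : Type*} {G : SimpleGraph V} {H : SimpleGraph W} {n : ℕ}
    (hG : G.CliqueFree n) (hH : H.CliqueFree n) : (G ⊕g H).CliqueFree n := by
  intro s hs
  have hL : G.IsClique (s.toLeft : Set V) := fun a ha b hb hab =>
    sum_adj_inl.1 <| hs.isClique (mem_toLeft.1 ha) (mem_toLeft.1 hb) (by simpa using hab)
  have hR : H.IsClique (s.toRight : Set W) := fun a ha b hb hab =>
    sum_adj_inr.1 <| hs.isClique (mem_toRight.1 ha) (mem_toRight.1 hb) (by simpa using hab)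
  have hcard := hs.card_eq ▸ card_toLeft_add_card_toRight (u := s)
  rcases s.toLeft.eq_empty_or_nonempty with hL0 | ⟨a, ha⟩
  · exact hH _ ⟨hR, by simpa [hL0] using hcard⟩
  rcases s.toRight.eq_empty_or_nonempty with hR0 | ⟨b, hb⟩
  · exact hG _ ⟨hL, by simpa [hR0] using hcard⟩
  exact not_adj_sum_inl_inr a b <|
    hs.isClique (mem_toLeft.1 ha) (mem_toRight.1 hb) Sum.inl_ne_inr

/-- The shift graph on the pairs `(i, j)` with `i < j`, in which `(i, j) ~ (j, l)`; the pairs with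
`j ≤ i` are kept as isolated vertices. -/
def shiftGraph (N : ℕ) : SimpleGraph (Fin N × Fin N) :=
  fromRel fun p q => p.1 < p.2 ∧ p.2 = q.1 ∧ q.1 < q.2

theorem shiftGraph_cliqueFree_three (N : ℕ) : (shiftGraph N).CliqueFree 3 := by
  intro s hs
  obtain ⟨a, b, c, hab, hac, hbc, -⟩ := is3Clique_iff.1 hs
  simp only [shiftGraph, fromRel_adj, Fin.lt_def, Prod.ext_iff, Fin.ext_iff, ne_eq] at hab hac hbc
  omega

/-- A proper colouring `c` with `m` colours is determined on vertex `i` of `Fin N` by the set of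
colours `c (i, j)` with `i < j`; adjacency of `(i, i')` and `(i', j)` makes this map injective. -/
theorem le_two_pow_of_shiftGraph_colorable {N m : ℕ} (h : (shiftGraph N).Colorable m) :
    N ≤ 2 ^ m := by
  obtain ⟨c⟩ := h
  let S (i : Fin N) : Finset (Fin m) := image (fun j => c (i, j)) {j | i < j}
  have hS {i i' : Fin N} (hii' : i < i') : S i ≠ S i' := by
    intro hSeq
    have hmem : c (i, i') ∈ S i' := hSeq ▸ mem_image_of_mem _ (mem_filter.2 ⟨mem_univ _, hii'⟩)
    obtain ⟨j, hj, hcj⟩ := mem_image.1 hmem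
    refine c.valid ?_ hcj
    exact (fromRel_adj _ _ _).2 ⟨by simp [hii'.ne'], .inr ⟨hii', rfl, (mem_filter.1 hj).2⟩⟩
  have hinj : Function.Injective S := fun i i' hSeq => by
    by_contra hne
    rcases lt_or_gt_of_ne hne with h | h
    exacts [hS h hSeq, hS h hSeq.symm]
  simpa using Fintype.card_le_of_injective S hinj

theorem le_chromaticNumber_shiftGraph (k : ℕ) : k ≤ (shiftGraph (2 ^ k)).chromaticNumber :=
  le_chromaticNumber_iff_colorable.2 fun _ h =>
    (Nat.pow_le_pow_iff_right one_lt_two).1 (le_two_pow_of_shiftGraph_colorable h)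

end SimpleGraph

open SimpleGraph

theorem exists_cliqueFree_isNClique_le_chromaticNumber {r : ℕ} (hr : 2 ≤ r) (k : ℕ) :
    ∃ n, ∃ H : SimpleGraph (Fin n), H.CliqueFree (r + 1) ∧
      (∃ C : Finset (Fin n), H.IsNClique r C) ∧ (k : ℕ∞) ≤ H.chromaticNumber := by
  let G := completeGraph (Fin r) ⊕g shiftGraph (2 ^ k)
  let e := Iso.map (Fintype.equivFin _) G
  refine ⟨_, G.map (Fintype.equivFin _).toEmbedding, ?_, ?_, ?_⟩
  · refine CliqueFree.comap e.isContained' (CliqueFree.sum (cliqueFree_of_card_lt ?_) ?_)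
    · simp
    · exact (shiftGraph_cliqueFree_three _).mono (by omega)
  · have hK : completeGraph (Fin r) ⊑ G.map (Fintype.equivFin _).toEmbedding :=
      Embedding.sumInl.isContained.trans e.isContained
    simpa [CliqueFree] using (not_cliqueFree_iff_top_isContained r).2 hK
  · exact ((le_chromaticNumber_shiftGraph k).trans chromaticNumber_le_sum_right).trans
      (chromaticNumber_congr e).le

theorem Nat.le_sub_sSup {s : Set ℕ} {a b : ℕ} (hs : s.Nonempty) (h : ∀ d ∈ s, d + b ≤ a) :
    b ≤ a - sSup s := by
  obtain ⟨d, hd⟩ := hs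
  have := csSup_le ⟨d, hd⟩ fun d hd => Nat.le_sub_of_add_le (h d hd)
  have := h d hd
  omega

theorem sub_le_lamGraph {r k n : ℕ} {H : SimpleGraph (Fin n)} (hfree : H.CliqueFree (r + 1))
    (hC : ∃ C : Finset (Fin n), H.IsNClique r C) (hk : (k : ℕ∞) ≤ H.chromaticNumber) :
    k - r ≤ lamGraph r H := by
  classical
  obtain ⟨C, hC⟩ := hC
  refine Nat.le_sub_sSup ⟨_, C, hC, rfl⟩ ?_
  rintro _ ⟨C, hC, rfl⟩
  simp_rw [← Nat.card_coe_set_eq, Nat.card_eq_fintype_card, card_neighborSet_eq_degree]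
  simpa using hC.sum_degree_add_sub_le hfree hk

theorem lam_lower_bound_general (k r : ℕ) (hr : 2 ≤ r) :
    k - r ≤ lam r k := by
  obtain ⟨n, H, hfree, hC, hk⟩ := exists_cliqueFree_isNClique_le_chromaticNumber hr k
  refine le_csInf ⟨_, n, H, hfree, hC, hk, rfl⟩ ?_
  rintro _ ⟨n, H, hfree, hC, hk, rfl⟩
  exact sub_le_lamGraph hfree hC hk

theorem lam_lower_bound (k r : ℕ) (hk : 2 ≤ k) (hr : 2 ≤ r) :
    k - r ≤ lam r k :=
  lam_lower_bound_general k r hr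
end

section
/- Let H be a K_{r+1}-free graph with clique number r, let C be an r-clique of H, and let S = {v ∉ C : v is adjacent to exactly r-1 vertices of C}. Then the induced subgraph of H on C ∪ S is r-colourable. -/
theorem colorable_clique_union_almost_full_neighbours {V : Type*} [Fintype V] (r : ℕ)
    (H : SimpleGraph V) (hfree : H.CliqueFree (r + 1))
    (C : Finset V) (hC : H.IsNClique r C) :
    (H.induce
      {v : V | v ∈ C ∨ (v ∉ C ∧ ((C : Set V) ∩ H.neighborSet v).ncard = r - 1)}).Colorable
      r := by
  classical
  rcases Nat.eq_zero_or_pos r with hr | hr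
  · subst hr
    have hV : IsEmpty V := ⟨fun v => hfree {v} ⟨by simp, by simp⟩⟩
    exact ⟨⟨fun v => hV.elim v.1, fun {a b} _ => (hV.elim a.1)⟩⟩
  have hCcard := hC.card_eq
  -- for each vertex outside C with exactly r-1 neighbours in C, there is a unique non-neighbour
  have key : ∀ v, v ∉ C → ((C : Set V) ∩ H.neighborSet v).ncard = r - 1 →
      ∃ w ∈ C, ¬ H.Adj v w ∧ ∀ u ∈ C, u ≠ w → H.Adj v u := by
    intro v hv hn
    have hfin : ((C : Set V) ∩ H.neighborSet v) = ↑(C ∩ H.neighborFinset v) := by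
      simp [Finset.coe_inter, SimpleGraph.neighborFinset_def]
    rw [hfin, Set.ncard_coe_finset] at hn
    have h1 : (C \ H.neighborFinset v).card = 1 := by
      have := Finset.card_inter_add_card_sdiff C (H.neighborFinset v)
      omega
    obtain ⟨w, hw⟩ := Finset.card_eq_one.mp h1
    have hwmem : w ∈ C \ H.neighborFinset v := hw ▸ Finset.mem_singleton_self w
    have hwC : w ∈ C := (Finset.mem_sdiff.mp hwmem).1
    have hwn : ¬ H.Adj v w := by
      have := (Finset.mem_sdiff.mp hwmem).2
      simpa using this
    refine ⟨w, hwC, hwn, ?_⟩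
    intro u hu hne
    by_contra hadj
    have hmem : u ∈ C \ H.neighborFinset v := by
      simp [hu, hadj]
    rw [hw, Finset.mem_singleton] at hmem
    exact hne hmem
  set Sset : Set V :=
    {v : V | v ∈ C ∨ (v ∉ C ∧ ((C : Set V) ∩ H.neighborSet v).ncard = r - 1)} with hSset
  have choice : ∀ v : Sset, ∃ w, w ∈ C ∧
      ((v : V) ∈ C → w = (v : V)) ∧
      ((v : V) ∉ C → ¬ H.Adj (v : V) w ∧ ∀ u ∈ C, u ≠ w → H.Adj (v : V) u) := by
    rintro ⟨v, hv | ⟨hv, hn⟩⟩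
    · exact ⟨v, hv, fun _ => rfl, fun h => absurd hv h⟩
    · obtain ⟨w, hw1, hw2, hw3⟩ := key v hv hn
      exact ⟨w, hw1, fun h => absurd h hv, fun _ => ⟨hw2, hw3⟩⟩
  choose f hf1 hf2 hf3 using choice
  have coloring : (H.induce Sset).Coloring ↥C := by
    refine SimpleGraph.Coloring.mk (fun v => ⟨f v, hf1 v⟩) ?_
    intro a b hab heq
    have hadj : H.Adj (a : V) (b : V) := hab
    have hne : (a : V) ≠ (b : V) := hadj.ne
    have hfeq : f a = f b := congrArg Subtype.val heq
    by_cases ha : (a : V) ∈ C <;> by_cases hb : (b : V) ∈ C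
    · exact hne (by rw [← hf2 a ha, ← hf2 b hb, hfeq])
    · -- a ∈ C, b ∉ C : b's non-neighbour is f b = f a = a, but b ~ a
      have : ¬ H.Adj (b : V) (f b) := (hf3 b hb).1
      rw [← hfeq, hf2 a ha] at this
      exact this hadj.symm
    · have : ¬ H.Adj (a : V) (f a) := (hf3 a ha).1
      rw [hfeq, hf2 b hb] at this
      exact this hadj
    · -- both outside C with the same non-neighbour w : build an (r+1)-clique
      set w := f a with hwdef
      have hwC : w ∈ C := hf1 a
      have haw : ∀ u ∈ C, u ≠ w → H.Adj (a : V) u := (hf3 a ha).2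
      have hbw : ∀ u ∈ C, u ≠ w → H.Adj (b : V) u := by
        intro u hu hune
        exact (hf3 b hb).2 u hu (hfeq ▸ hune)
      set K : Finset V := insert (a : V) (insert (b : V) (C.erase w)) with hK
      have hclique : H.IsNClique (r + 1) K := by
        constructor
        · intro x hx y hy hxy
          simp only [hK, Finset.mem_coe, Finset.mem_insert, Finset.mem_erase] at hx hy
          have adjC : ∀ u, u ∈ C.erase w → H.Adj (a : V) u ∧ H.Adj (b : V) u := by
            intro u hu
            have huC := Finset.mem_of_mem_erase hu
            have hune := Finset.ne_of_mem_erase hu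
            exact ⟨haw u huC hune, hbw u huC hune⟩
          rcases hx with rfl | rfl | hx <;> rcases hy with rfl | rfl | hy
          · exact absurd rfl hxy
          · exact hadj
          · exact (adjC y (Finset.mem_erase.mpr hy)).1
          · exact hadj.symm
          · exact absurd rfl hxy
          · exact (adjC y (Finset.mem_erase.mpr hy)).2
          · exact ((adjC x (Finset.mem_erase.mpr hx)).1).symm
          · exact ((adjC x (Finset.mem_erase.mpr hx)).2).symm
          · exact hC.1 hx.2 hy.2 hxy
        · have h1 : (b : V) ∉ C.erase w := fun h => hb (Finset.mem_of_mem_erase h)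
          have h2 : (a : V) ∉ insert (b : V) (C.erase w) := by
            simp only [Finset.mem_insert]
            rintro (h | h)
            · exact hne h
            · exact ha (Finset.mem_of_mem_erase h)
          rw [hK, Finset.card_insert_of_notMem h2, Finset.card_insert_of_notMem h1,
            Finset.card_erase_of_mem hwC, hCcard]
          omega
      exact hfree K hclique
  have := coloring.colorable
  rwa [Fintype.card_coe, hCcard] at this
end

section
/- Λ_2(4) = 3: every triangle-free graph H containing an edge vw such that v and w have at most 2 common non-neighbours is 3-colourable; and there exists a triangle-free graph of chromatic number at least 4 (the Grötzsch graph) with an edge vw such that |V(H)| - deg(v) - deg(w) = 3. -/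
set_option maxRecDepth 10000
set_option synthInstance.maxSize 5000
set_option synthInstance.maxHeartbeats 1000000
set_option maxHeartbeats 1000000

def gedges : List (Fin 11 × Fin 11) :=
  [(0,1),(1,2),(2,3),(3,4),(4,0),
   (5,1),(5,4),(6,2),(6,0),(7,3),(7,1),(8,4),(8,2),(9,0),(9,3),
   (10,5),(10,6),(10,7),(10,8),(10,9)]

def GG : SimpleGraph (Fin 11) := SimpleGraph.fromRel (fun a b => (a,b) ∈ gedges)

instance : DecidableRel GG.Adj := fun a b => by
  unfold GG; rw [SimpleGraph.fromRel_adj]; infer_instance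

lemma GG_cf : GG.CliqueFree 3 := by
  have h : ∀ a b c : Fin 11, ¬(GG.Adj a b ∧ GG.Adj a c ∧ GG.Adj b c) := by decide
  intro t ht
  rw [SimpleGraph.is3Clique_iff] at ht
  obtain ⟨a, b, c, hab, hbc, hac, -⟩ := ht
  exact h a b c ⟨hab, hbc, hac⟩

lemma GG_key : ∀ c0 c1 c2 c3 c4 cz : Fin 3,
  ¬((c0≠c1) ∧ (c1≠c2) ∧ (c2≠c3) ∧ (c3≠c4) ∧ (c4≠c0) ∧
    (∃ b : Fin 3, b≠c1 ∧ b≠c4 ∧ b≠cz) ∧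
    (∃ b : Fin 3, b≠c2 ∧ b≠c0 ∧ b≠cz) ∧
    (∃ b : Fin 3, b≠c3 ∧ b≠c1 ∧ b≠cz) ∧
    (∃ b : Fin 3, b≠c4 ∧ b≠c2 ∧ b≠cz) ∧
    (∃ b : Fin 3, b≠c0 ∧ b≠c3 ∧ b≠cz)) := by decide

lemma GG_not_col : ¬ GG.Colorable 3 := by
  rintro ⟨c⟩
  have hv : ∀ a b : Fin 11, GG.Adj a b → c a ≠ c b := fun a b h => c.valid h
  have adj : ∀ p ∈ gedges, GG.Adj p.1 p.2 := by decide
  refine GG_key (c 0) (c 1) (c 2) (c 3) (c 4) (c 10)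
    ⟨hv 0 1 (by decide), hv 1 2 (by decide), hv 2 3 (by decide), hv 3 4 (by decide),
     hv 4 0 (by decide),
     ⟨c 5, hv 5 1 (by decide), hv 5 4 (by decide), (hv 10 5 (by decide)).symm⟩,
     ⟨c 6, hv 6 2 (by decide), hv 6 0 (by decide), (hv 10 6 (by decide)).symm⟩,
     ⟨c 7, hv 7 3 (by decide), hv 7 1 (by decide), (hv 10 7 (by decide)).symm⟩,
     ⟨c 8, hv 8 4 (by decide), hv 8 2 (by decide), (hv 10 8 (by decide)).symm⟩,
     ⟨c 9, hv 9 0 (by decide), hv 9 3 (by decide), (hv 10 9 (by decide)).symm⟩⟩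

theorem lam_two_four :
    (∀ (V : Type) (_ : Fintype V) (H : SimpleGraph V) (v w : V), H.CliqueFree 3 →
        H.Adj v w → ({x : V | ¬ H.Adj v x ∧ ¬ H.Adj w x}).ncard ≤ 2 → H.Colorable 3) ∧
      (∃ n : ℕ, ∃ H : SimpleGraph (Fin n), H.CliqueFree 3 ∧
        (4 : ℕ∞) ≤ H.chromaticNumber ∧
        ∃ v w : Fin n, H.Adj v w ∧
          n - (H.neighborSet v).ncard - (H.neighborSet w).ncard = 3) := by
  constructor
  · intro V _ H v w hcf hvw hS
    classical
    have tri : ∀ a b c : V, H.Adj a b → H.Adj a c → H.Adj b c → False := by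
      intro a b c h1 h2 h3
      exact hcf {a, b, c} (SimpleGraph.is3Clique_triple_iff.mpr ⟨h1, h2, h3⟩)
    set S : Set V := {x : V | ¬ H.Adj v x ∧ ¬ H.Adj w x} with hSdef
    by_cases hadj : ∃ s1 ∈ S, ∃ s2 ∈ S, H.Adj s1 s2
    · obtain ⟨s1, hs1, s2, hs2, h12⟩ := hadj
      have hne : s1 ≠ s2 := h12.ne
      have hSeq : ({s1, s2} : Set V) = S := by
        apply Set.eq_of_subset_of_ncard_le
        · intro x hx
          rcases hx with h | h <;> subst h <;> assumption
        · rwa [Set.ncard_pair hne]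
        · exact S.toFinite
      refine ⟨SimpleGraph.Coloring.mk
        (fun x => if H.Adj w x then 1 else
          if x = s2 ∨ (H.Adj v x ∧ ¬ H.Adj s2 x) then 0 else 2) ?_⟩
      intro a b hab
      by_cases hwa : H.Adj w a <;> by_cases hwb : H.Adj w b
      · exact absurd (tri w a b hwa hwb hab) id
      · simp only [if_pos hwa, if_neg hwb]; split_ifs <;> decide
      · simp only [if_neg hwa, if_pos hwb]; split_ifs <;> decide
      · simp only [if_neg hwa, if_neg hwb]
        by_cases hpa : a = s2 ∨ (H.Adj v a ∧ ¬ H.Adj s2 a) <;>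
          by_cases hpb : b = s2 ∨ (H.Adj v b ∧ ¬ H.Adj s2 b)
        · rw [if_pos hpa, if_pos hpb]
          intro _
          rcases hpa with rfl | ⟨hva, hsa⟩
          · rcases hpb with rfl | ⟨hvb, hsb⟩
            · exact hab.ne rfl
            · exact hsb hab
          · rcases hpb with rfl | ⟨hvb, hsb⟩
            · exact hsa hab.symm
            · exact tri v a b hva hvb hab
        · rw [if_pos hpa, if_neg hpb]; decide
        · rw [if_neg hpa, if_pos hpb]; decide
        · rw [if_neg hpa, if_neg hpb]
          intro _
          push_neg at hpa hpb
          obtain ⟨hpa1, hpa2⟩ := hpa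
          obtain ⟨hpb1, hpb2⟩ := hpb
          have ha' : a = s1 ∨ (H.Adj v a ∧ H.Adj s2 a) := by
            by_cases hva : H.Adj v a
            · exact Or.inr ⟨hva, hpa2 hva⟩
            · have : a ∈ S := ⟨hva, hwa⟩
              rw [← hSeq] at this
              rcases this with h | h
              · exact Or.inl h
              · exact absurd h hpa1
          have hb' : b = s1 ∨ (H.Adj v b ∧ H.Adj s2 b) := by
            by_cases hvb : H.Adj v b
            · exact Or.inr ⟨hvb, hpb2 hvb⟩
            · have : b ∈ S := ⟨hvb, hwb⟩
              rw [← hSeq] at this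
              rcases this with h | h
              · exact Or.inl h
              · exact absurd h hpb1
          rcases ha' with rfl | ⟨hva, hsa⟩
          · rcases hb' with rfl | ⟨hvb, hsb⟩
            · exact hab.ne rfl
            · exact tri a s2 b h12 hab hsb
          · rcases hb' with rfl | ⟨hvb, hsb⟩
            · exact tri b s2 a h12 hab.symm hsa
            · exact tri v a b hva hvb hab
    · push_neg at hadj
      refine ⟨SimpleGraph.Coloring.mk
        (fun x => if H.Adj w x then 1 else if H.Adj v x then 0 else 2) ?_⟩
      intro a b hab
      by_cases hwa : H.Adj w a <;> by_cases hwb : H.Adj w b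
      · exact absurd (tri w a b hwa hwb hab) id
      · simp only [if_pos hwa, if_neg hwb]; split_ifs <;> decide
      · simp only [if_neg hwa, if_pos hwb]; split_ifs <;> decide
      · simp only [if_neg hwa, if_neg hwb]
        by_cases hva : H.Adj v a <;> by_cases hvb : H.Adj v b
        · exact absurd (tri v a b hva hvb hab) id
        · rw [if_pos hva, if_neg hvb]; decide
        · rw [if_neg hva, if_pos hvb]; decide
        · rw [if_neg hva, if_neg hvb]
          intro _
          exact hadj a ⟨hva, hwa⟩ b ⟨hvb, hwb⟩ hab
  · refine ⟨11, GG, GG_cf, ?_, 0, 1, by decide, ?_⟩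
    · have h3 : ¬ (GG.chromaticNumber ≤ (3 : ℕ)) := by
        rw [SimpleGraph.chromaticNumber_le_iff_colorable]
        exact GG_not_col
      rw [not_le] at h3
      have h4 := Order.add_one_le_of_lt h3
      refine le_trans (le_of_eq ?_) h4
      norm_num
    · have h0 : (GG.neighborSet 0).ncard = 4 := by
        rw [Set.ncard_eq_toFinset_card']; decide
      have h1 : (GG.neighborSet 1).ncard = 4 := by
        rw [Set.ncard_eq_toFinset_card']; decide
      rw [h0, h1]
end
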